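/- arXiv:2012.03173 — 2 statements merged into one kernel-verified Lean document; each statement's English description precedes it below -/
import Mathlib

section
/- Inner maximization of the AUC-margin objective: for all a, b ∈ ℝ, the supremum over α ∈ [0,∞) of E_μ[F_M(a,b,α)] equals p(1−p)·( E_{μ₊}[(S − a)²] + E_{μ₋}[(S − b)²] + (max(m + b(S) − a(S), 0))² ). -/
/-! Splitting `Ω` into `A` and `Aᶜ`, the expected integrand is
`p(1−p)(E_{μ₊}[(S−a)²] + E_{μ₋}[(S−b)²] + 2αd − α²)` with `d = m + b(S) − a(S)`: a concave
quadratic in `α`, maximised over `α ≥ 0` at `α = max d 0` with value `(max d 0)²`. -/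

open MeasureTheory ProbabilityTheory

/-- The AUC-margin integrand
`F_M(a,b,α) = (1−p)(S−a)²·1_A + p(S−b)²·1_{Aᶜ} − p(1−p)α² + 2α(p(1−p)m + p·S·1_{Aᶜ} − (1−p)·S·1_A)`. -/
noncomputable def FM {Ω : Type*} (A : Set Ω) (p m : ℝ) (S : Ω → ℝ)
    (a b α : ℝ) (ω : Ω) : ℝ :=
  (1 - p) * (S ω - a) ^ 2 * A.indicator 1 ω
    + p * (S ω - b) ^ 2 * Aᶜ.indicator 1 ω
    - p * (1 - p) * α ^ 2
    + 2 * α * (p * (1 - p) * m + p * S ω * Aᶜ.indicator 1 ω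
        - (1 - p) * S ω * A.indicator 1 ω)

open Set

lemma isGreatest_two_mul_mul_sub_sq (d : ℝ) :
    IsGreatest ((fun α : ℝ => 2 * α * d - α ^ 2) '' Ici 0) (max d 0 ^ 2) := by
  refine ⟨⟨max d 0, le_max_right d 0, ?_⟩, ?_⟩
  · rcases le_total d 0 with hd | hd
    · simp [max_eq_right hd]
    · rw [max_eq_left hd]; ring
  · rintro _ ⟨α, hα, rfl⟩
    have hα : 0 ≤ α := hα
    nlinarith [sq_nonneg (α - max d 0), mul_le_mul_of_nonneg_left (le_max_left d 0) hα]

section Conditioning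

variable {Ω E : Type*} [MeasurableSpace Ω] [NormedAddCommGroup E] {μ : Measure Ω}

lemma MeasureTheory.Integrable.cond {f : Ω → E} (hf : Integrable f μ) (s : Set Ω) :
    Integrable f μ[|s] := by
  by_cases hs : μ s = 0
  · simp [cond_eq_zero_of_meas_eq_zero hs]
  · exact hf.restrict.smul_measure (ENNReal.inv_ne_top.2 hs)

lemma setIntegral_eq_measureReal_smul_integral_cond [NormedSpace ℝ E] [IsFiniteMeasure μ]
    (s : Set Ω) (f : Ω → E) :
    ∫ ω in s, f ω ∂μ = μ.real s • ∫ ω, f ω ∂μ[|s] := by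
  by_cases hs : μ s = 0
  · simp [Measure.restrict_eq_zero.2 hs, measureReal_def, hs]
  · rw [ProbabilityTheory.cond, integral_smul_measure, smul_smul, measureReal_def,
      ENNReal.toReal_inv, mul_inv_cancel₀ (ENNReal.toReal_ne_zero.2 ⟨hs, measure_ne_top μ s⟩),
      one_smul]

end Conditioning

lemma FM_eq_indicator_add_indicator_add_const {Ω : Type*} (A : Set Ω) (p m : ℝ) (S : Ω → ℝ)
    (a b α : ℝ) (ω : Ω) :
    FM A p m S a b α ω = A.indicator (fun ω => (1 - p) * ((S ω - a) ^ 2 - 2 * α * S ω)) ω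
      + Aᶜ.indicator (fun ω => p * ((S ω - b) ^ 2 + 2 * α * S ω)) ω
      + p * (1 - p) * (2 * α * m - α ^ 2) := by
  by_cases h : ω ∈ A <;> simp [FM, h] <;> ring

lemma integral_FM {Ω : Type*} [MeasurableSpace Ω] {μ : Measure Ω} [IsProbabilityMeasure μ]
    {A : Set Ω} (hA : MeasurableSet A) {S : Ω → ℝ} (hS : MemLp S 2 μ) (m a b α : ℝ) :
    ∫ ω, FM A (μ.real A) m S a b α ω ∂μ = μ.real A * (1 - μ.real A) *
      ((∫ ω, (S ω - a) ^ 2 ∂μ[|A]) + (∫ ω, (S ω - b) ^ 2 ∂μ[|Aᶜ])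
        + (2 * α * (m + (∫ ω, S ω ∂μ[|Aᶜ]) - (∫ ω, S ω ∂μ[|A])) - α ^ 2)) := by
  set p := μ.real A
  have hS₁ : Integrable S μ := hS.integrable one_le_two
  have hSa : Integrable (fun ω => (S ω - a) ^ 2) μ := (hS.sub (memLp_const a)).integrable_sq
  have hSb : Integrable (fun ω => (S ω - b) ^ 2) μ := (hS.sub (memLp_const b)).integrable_sq
  have hpos : Integrable (A.indicator fun ω => (1 - p) * ((S ω - a) ^ 2 - 2 * α * S ω)) μ :=
    ((hSa.sub (hS₁.const_mul _)).const_mul _).indicator hA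
  have hneg : Integrable (Aᶜ.indicator fun ω => p * ((S ω - b) ^ 2 + 2 * α * S ω)) μ :=
    ((hSb.add (hS₁.const_mul _)).const_mul _).indicator hA.compl
  simp only [FM_eq_indicator_add_indicator_add_const]
  rw [integral_add (hpos.add hneg : Integrable (fun ω => _ + _) μ) (integrable_const _),
    integral_add hpos hneg,
    integral_indicator hA, integral_indicator hA.compl,
    setIntegral_eq_measureReal_smul_integral_cond A,
    setIntegral_eq_measureReal_smul_integral_cond Aᶜ,
    integral_const_mul, integral_const_mul, integral_sub (hSa.cond A) ((hS₁.cond A).const_mul _),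
    integral_add (hSb.cond Aᶜ) ((hS₁.cond Aᶜ).const_mul _), integral_const_mul, integral_const_mul,
    integral_const, probReal_compl_eq_one_sub hA]
  simp only [probReal_univ, smul_eq_mul, one_mul]
  ring

theorem inner_max_AUC_margin_general
    {Ω : Type*} [MeasurableSpace Ω] (μ : Measure Ω) [IsProbabilityMeasure μ]
    (A : Set Ω) (hA : MeasurableSet A)
    (p : ℝ) (hp : p = (μ A).toReal)
    (S : Ω → ℝ) (hS : MemLp S 2 μ) (m : ℝ) :
    ∀ a b : ℝ,
      sSup ((fun α : ℝ => ∫ ω, FM A p m S a b α ω ∂μ) '' Set.Ici 0)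
        = p * (1 - p) *
          ((∫ ω, (S ω - a) ^ 2 ∂μ[|A]) + (∫ ω, (S ω - b) ^ 2 ∂μ[|Aᶜ])
            + max (m + (∫ ω, S ω ∂μ[|Aᶜ]) - (∫ ω, S ω ∂μ[|A])) 0 ^ 2) := by
  intro a b
  rw [← measureReal_def] at hp
  subst hp
  have hweight : 0 ≤ μ.real A * (1 - μ.real A) :=
    mul_nonneg measureReal_nonneg (sub_nonneg.2 measureReal_le_one)
  have hmono : Monotone fun x => μ.real A * (1 - μ.real A) *
      ((∫ ω, (S ω - a) ^ 2 ∂μ[|A]) + (∫ ω, (S ω - b) ^ 2 ∂μ[|Aᶜ]) + x) :=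
    (monotone_id.const_add _).const_mul hweight
  have hmax := hmono.map_isGreatest (isGreatest_two_mul_mul_sub_sq
    (m + (∫ ω, S ω ∂μ[|Aᶜ]) - (∫ ω, S ω ∂μ[|A])))
  rw [image_image] at hmax
  simp only [integral_FM hA hS]
  exact hmax.csSup_eq

/-- Inner maximization of the AUC-margin objective: for all `a, b ∈ ℝ`, the supremum over
`α ∈ [0,∞)` of `E_μ[F_M(a,b,α)]` equals
`p(1−p)·(E_{μ₊}[(S−a)²] + E_{μ₋}[(S−b)²] + (max(m + b(S) − a(S), 0))²)`. -/
theorem inner_max_AUC_margin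
    {Ω : Type*} [MeasurableSpace Ω] (μ : Measure Ω) [IsProbabilityMeasure μ]
    (A : Set Ω) (hA : MeasurableSet A)
    (p : ℝ) (hp : p = (μ A).toReal) (hp0 : 0 < p) (hp1 : p < 1)
    (S : Ω → ℝ) (hS : MemLp S 2 μ) (m : ℝ) :
    ∀ a b : ℝ,
      sSup ((fun α : ℝ => ∫ ω, FM A p m S a b α ω ∂μ) '' Set.Ici 0)
        = p * (1 - p) *
          ((∫ ω, (S ω - a) ^ 2 ∂μ[|A]) + (∫ ω, (S ω - b) ^ 2 ∂μ[|Aᶜ])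
            + max (m + (∫ ω, S ω ∂μ[|Aᶜ]) - (∫ ω, S ω ∂μ[|A])) 0 ^ 2) :=
  inner_max_AUC_margin_general μ A hA p hp S hS m
end

section
/- Removing the non-negativity constraint on α recovers the margin square loss: E_{μ₊}[(S − a(S))²] + E_{μ₋}[(S − b(S))²] + sup_{α∈ℝ} (2α(m − a(S) + b(S)) − α²) = ∫∫ (m − s + t)² d(μ₊ ∘ S⁻¹)(s) d(μ₋ ∘ S⁻¹)(t), i.e., the AUC margin objective with unconstrained dual variable equals the pairwise square loss with margin m for independent positive and negative scores. -/
/-!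
Completing the square, `sup_α (2αc − α²) = c²` with `c = m − a(S) + b(S)`. On the other side,
for a square-integrable `Z` and a constant `c`, `E[(Z + c)²] = Var Z + (E Z + c)²`; applying
this first to the inner integral (in `t`) and then to the outer one (in `s`) turns the pairwise
loss into `Var₋ S + Var₊ S + (m − a(S) + b(S))²`.
-/

open MeasureTheory ProbabilityTheory

lemma sSup_range_two_mul_mul_sub_sq (c : ℝ) :
    sSup (Set.range fun α : ℝ => 2 * α * c - α ^ 2) = c ^ 2 := by
  refine IsGreatest.csSup_eq ⟨⟨c, by ring⟩, ?_⟩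
  rintro _ ⟨α, rfl⟩
  nlinarith [sq_nonneg (α - c)]

lemma MeasureTheory.MemLp.cond {Ω E : Type*} [MeasurableSpace Ω] [NormedAddCommGroup E]
    {μ : Measure Ω} {s : Set Ω} {f : Ω → E} {p : ENNReal} (hf : MemLp f p μ) (hs : μ s ≠ 0) :
    MemLp f p μ[|s] :=
  (hf.restrict s).smul_measure (ENNReal.inv_ne_top.2 hs)

namespace ProbabilityTheory

variable {Ω Ω' : Type*} [MeasurableSpace Ω] [MeasurableSpace Ω'] {μ : Measure Ω}
  {ν : Measure Ω'} [IsProbabilityMeasure μ] [IsProbabilityMeasure ν] {X : Ω → ℝ} {Y : Ω' → ℝ}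

lemma integral_add_const_sq (hX : MemLp X 2 μ) (c : ℝ) :
    ∫ ω, (X ω + c) ^ 2 ∂μ = Var[X; μ] + (μ[X] + c) ^ 2 := by
  have hXc : MemLp (fun ω => X ω + c) 2 μ := hX.add (memLp_const c)
  have hmean : μ[fun ω => X ω + c] = μ[X] + c := by
    rw [integral_add (hX.integrable one_le_two) (integrable_const c)]
    simp
  rw [← variance_add_const hX.aestronglyMeasurable c, variance_eq_sub hXc, hmean]
  simp only [Pi.pow_apply]
  ring

lemma integral_integral_map_sub_add_sq (hX : MemLp X 2 μ) (hY : MemLp Y 2 ν) (m : ℝ) :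
    ∫ s, ∫ t, (m - s + t) ^ 2 ∂(ν.map Y) ∂(μ.map X)
      = Var[X; μ] + Var[Y; ν] + (m - μ[X] + ν[Y]) ^ 2 := by
  have hinner (s : ℝ) :
      ∫ t, (m - s + t) ^ 2 ∂(ν.map Y) = Var[Y; ν] + (s + -(m + ν[Y])) ^ 2 := by
    rw [integral_map hY.aemeasurable (by fun_prop)]
    calc ∫ ω, (m - s + Y ω) ^ 2 ∂ν = ∫ ω, (Y ω + (m - s)) ^ 2 ∂ν := by simp only [add_comm]
      _ = _ := by rw [integral_add_const_sq hY]; ring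
  have hsq : Integrable (fun ω => (X ω + -(m + ν[Y])) ^ 2) μ :=
    (hX.add (memLp_const _)).integrable_sq
  simp_rw [hinner]
  rw [integral_map hX.aemeasurable (by fun_prop), integral_add (integrable_const _) hsq,
    integral_const, integral_add_const_sq hX]
  simp only [probReal_univ, one_smul]
  ring

end ProbabilityTheory

theorem unconstrained_dual_recovers_margin_square_loss_general
    {Ω : Type*} [MeasurableSpace Ω] (μ : Measure Ω) [IsProbabilityMeasure μ]
    (A : Set Ω)
    (p : ℝ) (hp : p = (μ A).toReal) (hp0 : 0 < p) (hp1 : p < 1)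
    (S : Ω → ℝ) (hS : MemLp S 2 μ) (m : ℝ)
    (aS bS : ℝ)
    (haS : aS = ∫ ω, S ω ∂μ[|A]) (hbS : bS = ∫ ω, S ω ∂μ[|Aᶜ]) :
    (∫ ω, (S ω - aS) ^ 2 ∂μ[|A]) + (∫ ω, (S ω - bS) ^ 2 ∂μ[|Aᶜ])
        + sSup (Set.range (fun α : ℝ => 2 * α * (m - aS + bS) - α ^ 2))
      = ∫ s, ∫ t, (m - s + t) ^ 2 ∂(Measure.map S μ[|Aᶜ]) ∂(Measure.map S μ[|A]) := by
  have hA : μ A ≠ 0 := fun h => by simp [hp, h] at hp0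
  have hAc : μ Aᶜ ≠ 0 := fun h => by simp [hp, measure_of_measure_compl_eq_zero h] at hp1
  have := cond_isProbabilityMeasure (μ := μ) hA
  have := cond_isProbabilityMeasure (μ := μ) hAc
  rw [integral_integral_map_sub_add_sq (hS.cond hA) (hS.cond hAc),
    variance_eq_integral (hS.cond hA).aemeasurable,
    variance_eq_integral (hS.cond hAc).aemeasurable, sSup_range_two_mul_mul_sub_sq, haS, hbS]

/-- Removing the non-negativity constraint on `α` recovers the margin square loss:
`E_{μ₊}[(S − a(S))²] + E_{μ₋}[(S − b(S))²] + sup_{α∈ℝ} (2α(m − a(S) + b(S)) − α²)`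
equals the pairwise square loss with margin `m` for independent positive and negative
scores, i.e. `∫∫ (m − s + t)² d(μ₊ ∘ S⁻¹)(s) d(μ₋ ∘ S⁻¹)(t)`. -/
theorem unconstrained_dual_recovers_margin_square_loss
    {Ω : Type*} [MeasurableSpace Ω] (μ : Measure Ω) [IsProbabilityMeasure μ]
    (A : Set Ω) (hA : MeasurableSet A)
    (p : ℝ) (hp : p = (μ A).toReal) (hp0 : 0 < p) (hp1 : p < 1)
    (S : Ω → ℝ) (hS : MemLp S 2 μ) (m : ℝ)
    (aS bS : ℝ)
    (haS : aS = ∫ ω, S ω ∂μ[|A]) (hbS : bS = ∫ ω, S ω ∂μ[|Aᶜ]) :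
    (∫ ω, (S ω - aS) ^ 2 ∂μ[|A]) + (∫ ω, (S ω - bS) ^ 2 ∂μ[|Aᶜ])
        + sSup (Set.range (fun α : ℝ => 2 * α * (m - aS + bS) - α ^ 2))
      = ∫ s, ∫ t, (m - s + t) ^ 2 ∂(Measure.map S μ[|Aᶜ]) ∂(Measure.map S μ[|A]) :=
  unconstrained_dual_recovers_margin_square_loss_general μ A p hp hp0 hp1 S hS m aS bS haS hbS
end
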